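/- arXiv:2307.13509 — 2 statements merged into one kernel-verified Lean document; each statement's English description precedes it below -/
import Mathlib

section
/- In the basis representation of Proposition on sparse data, the squared α-Mahalanobis distance of observation X_i with respect to the subset H_0 equals the quadratic form (e_i − (1/h)1_{H_0})' C C̃_{H_0}(C̃_{H_0} + α I_M)^{-2} C' (e_i − (1/h)1_{H_0}); i.e., ‖Ĉ_{H_0}^{1/2}(Ĉ_{H_0} + αI)^{-1}(X_i − X̄_{H_0})‖² = ∑_{j=1}^M (λ̂_j/(λ̂_j + α)²) (⟨ψ̂_j, X_i − X̄_{H_0}⟩)², which equals this matrix expression. -/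
/-!
Everything lives in the span of the orthonormal family `φ`, on which
`Fintype.linearCombination` is an isometry from `(ℝ^M, ⬝ᵥ)`. In these coordinates the centred
observation `Y = Xᵢ − X̄` is `z = Cᵀ (eᵢ − h⁻¹ 1_{H₀})`, the sample covariance operator `Ĉ` acts
as the matrix `C̃`, and hence the resolvent `R` acts as `B = (C̃ + αI)⁻¹`; this matrix is
invertible because `R` is a left inverse of `Ĉ + αI` and the isometry is injective. As `S² = Ĉ`
with `S` self-adjoint, `‖S R Y‖² = ⟪Ĉ R Y, R Y⟫ = (C̃ B z) ⬝ (B z)`. Both this and the quadratic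
form `z ⬝ C̃ B² z` are evaluated in the orthonormal eigenbasis `u` of `C̃`, where every matrix
involved is diagonal.
-/

open MeasureTheory Matrix Finset
open scoped RealInnerProductSpace

lemma Finset.sum_sub_average_eq_zero {ι 𝕜 : Type*} [DivisionRing 𝕜] [CharZero 𝕜]
    (s : Finset ι) (x : ι → 𝕜) : ∑ k ∈ s, (x k - (#s : 𝕜)⁻¹ * ∑ l ∈ s, x l) = 0 := by
  rcases s.eq_empty_or_nonempty with rfl | hs
  · simp
  · rw [sum_sub_distrib, sum_const, nsmul_eq_mul,
      mul_inv_cancel_left₀ (Nat.cast_ne_zero.mpr hs.card_pos.ne'), sub_self]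

section Centering

variable (𝕜 : Type*) [Field 𝕜] {ι : Type*} [DecidableEq ι] (s : Finset ι)

def indicatorVec : ι → 𝕜 := fun i => if i ∈ s then 1 else 0

def centeringMatrix : Matrix ι ι 𝕜 :=
  diagonal (indicatorVec 𝕜 s) - (#s : 𝕜)⁻¹ • vecMulVec (indicatorVec 𝕜 s) (indicatorVec 𝕜 s)

def centeredBasisVec (i : ι) : ι → 𝕜 :=
  fun j => (if j = i then 1 else 0) - (#s : 𝕜)⁻¹ * indicatorVec 𝕜 s j

variable {𝕜} [Fintype ι]

lemma indicatorVec_dotProduct (x : ι → 𝕜) : indicatorVec 𝕜 s ⬝ᵥ x = ∑ l ∈ s, x l := by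
  simp [indicatorVec, dotProduct, ite_mul, sum_ite_mem]

lemma sum_centeredBasisVec_apply_smul {V : Type*} [AddCommGroup V] [Module 𝕜 V] (i : ι)
    (y : ι → V) : ∑ l, centeredBasisVec 𝕜 s i l • y l = y i - (#s : 𝕜)⁻¹ • ∑ l ∈ s, y l := by
  simp [centeredBasisVec, indicatorVec, sub_smul, sum_sub_distrib, ite_smul, ← smul_sum,
    sum_ite_mem]

lemma centeredBasisVec_dotProduct (i : ι) (x : ι → 𝕜) :
    centeredBasisVec 𝕜 s i ⬝ᵥ x = x i - (#s : 𝕜)⁻¹ * ∑ l ∈ s, x l := by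
  simpa only [dotProduct, smul_eq_mul] using sum_centeredBasisVec_apply_smul (𝕜 := 𝕜) s i x

lemma centeringMatrix_mulVec_apply (x : ι → 𝕜) (l : ι) :
    (centeringMatrix 𝕜 s *ᵥ x) l = indicatorVec 𝕜 s l * (x l - (#s : 𝕜)⁻¹ * ∑ k ∈ s, x k) := by
  simp [centeringMatrix, sub_mulVec, smul_mulVec, mulVec_diagonal, vecMulVec_mulVec,
    indicatorVec_dotProduct]
  ring

lemma sum_centeredBasisVec_smul [CharZero 𝕜] (x : ι → 𝕜) :
    ∑ k ∈ s, (centeredBasisVec 𝕜 s k ⬝ᵥ x) • centeredBasisVec 𝕜 s k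
      = centeringMatrix 𝕜 s *ᵥ x := by
  ext l
  simp only [Finset.sum_apply, Pi.smul_apply, smul_eq_mul, centeredBasisVec_dotProduct,
    centeringMatrix_mulVec_apply, centeredBasisVec]
  simp_rw [mul_sub]
  rw [sum_sub_distrib, ← sum_mul, sum_sub_average_eq_zero]
  by_cases hl : l ∈ s <;> simp [indicatorVec, hl]

lemma sum_transpose_mulVec_centeredBasisVec_smul [CharZero 𝕜] {m : Type*} [Fintype m]
    (C : Matrix ι m 𝕜) (v : m → 𝕜) :
    ∑ k ∈ s, ((Cᵀ *ᵥ centeredBasisVec 𝕜 s k) ⬝ᵥ v) • (Cᵀ *ᵥ centeredBasisVec 𝕜 s k)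
      = (Cᵀ * centeringMatrix 𝕜 s * C) *ᵥ v := by
  simp_rw [mulVec_transpose, ← dotProduct_mulVec, ← mulVec_transpose, ← mulVec_smul,
    ← mulVec_sum, sum_centeredBasisVec_smul, mulVec_mulVec, Matrix.mul_assoc]

lemma sub_average_eq_map_centeredBasisVec {V : Type*} [AddCommGroup V] [Module 𝕜 V]
    {m : Type*} [Fintype m] (L : (m → 𝕜) →ₗ[𝕜] V) (C : Matrix ι m 𝕜) {X : ι → V}
    (hX : ∀ k, X k = L (C k)) (k : ι) :
    X k - (#s : 𝕜)⁻¹ • ∑ l ∈ s, X l = L (Cᵀ *ᵥ centeredBasisVec 𝕜 s k) := by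
  rw [mulVec_transpose, vecMul_eq_sum, map_sum]
  simp only [map_smul, ← hX]
  exact (sum_centeredBasisVec_apply_smul s k X).symm

end Centering

section Spectral

variable {𝕜 n : Type*} [Fintype n]

lemma dotProduct_mul_mul_transpose_mulVec [CommSemiring 𝕜] {m : Type*} [Fintype m]
    (C : Matrix m n 𝕜)
    (K : Matrix n n 𝕜) (w : m → 𝕜) :
    w ⬝ᵥ (C * K * Cᵀ) *ᵥ w = (Cᵀ *ᵥ w) ⬝ᵥ K *ᵥ (Cᵀ *ᵥ w) := by
  rw [← mulVec_mulVec, ← mulVec_mulVec, dotProduct_mulVec, ← mulVec_transpose]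

lemma mul_mulVec_eq_smul [CommSemiring 𝕜] {K K' : Matrix n n 𝕜} {v : n → 𝕜} {μ μ' : 𝕜}
    (hK : K *ᵥ v = μ • v) (hK' : K' *ᵥ v = μ' • v) : (K * K') *ᵥ v = (μ * μ') • v := by
  rw [← mulVec_mulVec, hK', mulVec_smul, hK, smul_smul, mul_comm]

variable [Field 𝕜] [DecidableEq n] {u : n → n → 𝕜}

lemma sum_dotProduct_smul_eq_self (hu : ∀ j k, u j ⬝ᵥ u k = if j = k then 1 else 0)
    (z : n → 𝕜) : ∑ j, (u j ⬝ᵥ z) • u j = z := by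
  have hUUt : of u * (of u)ᵀ = 1 := by
    ext j k
    simpa [mul_apply, one_apply, dotProduct] using hu j k
  calc ∑ j, (u j ⬝ᵥ z) • u j = (of u)ᵀ *ᵥ (of u *ᵥ z) := by
        rw [mulVec_transpose, vecMul_eq_sum]; rfl
    _ = z := by rw [mulVec_mulVec, mul_eq_one_comm.mp hUUt, one_mulVec]

lemma mulVec_dotProduct_mulVec_eq_sum (hu : ∀ j k, u j ⬝ᵥ u k = if j = k then 1 else 0)
    {K K' : Matrix n n 𝕜} {μ μ' : n → 𝕜} (hK : ∀ j, K *ᵥ u j = μ j • u j)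
    (hK' : ∀ j, K' *ᵥ u j = μ' j • u j) (z : n → 𝕜) :
    (K *ᵥ z) ⬝ᵥ (K' *ᵥ z) = ∑ j, μ j * μ' j * (u j ⬝ᵥ z) ^ 2 := by
  rw [← sum_dotProduct_smul_eq_self hu z]
  simp only [mulVec_sum, mulVec_smul, hK, hK', sum_dotProduct, dotProduct_sum, smul_dotProduct,
    dotProduct_smul, hu, smul_eq_mul, mul_ite, mul_one, mul_zero, sum_ite_eq, sum_ite_eq',
    mem_univ, if_true]
  exact sum_congr rfl fun _ _ => by ring

lemma dotProduct_mulVec_eq_sum (hu : ∀ j k, u j ⬝ᵥ u k = if j = k then 1 else 0)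
    {K : Matrix n n 𝕜} {μ : n → 𝕜} (hK : ∀ j, K *ᵥ u j = μ j • u j) (z : n → 𝕜) :
    z ⬝ᵥ K *ᵥ z = ∑ j, μ j * (u j ⬝ᵥ z) ^ 2 := by
  simpa [dotProduct_comm z] using
    mulVec_dotProduct_mulVec_eq_sum hu hK (K' := 1) (μ' := 1) (by simp) z

lemma inv_mulVec_eq_inv_smul {A : Matrix n n 𝕜} (hA : IsUnit A) {v : n → 𝕜} {μ : 𝕜}
    (hv : A *ᵥ v = μ • v) : A⁻¹ *ᵥ v = μ⁻¹ • v := by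
  have hv' : v = μ • A⁻¹ *ᵥ v := by
    rw [← mulVec_smul, ← hv, mulVec_mulVec, nonsing_inv_mul A ((isUnit_iff_isUnit_det A).mp hA),
      one_mulVec]
  rcases eq_or_ne μ 0 with rfl | hμ
  · rw [zero_smul] at hv'
    rw [hv', mulVec_zero, smul_zero]
  · rw [hv', smul_smul, inv_mul_cancel₀ hμ, one_smul, ← hv']

end Spectral

section Intertwining

variable {𝕜 n E : Type*} [Field 𝕜] [Fintype n] [DecidableEq n] [AddCommGroup E] [Module 𝕜 E]
  {L : (n → 𝕜) →ₗ[𝕜] E} {T R : E → E} {A : Matrix n n 𝕜}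

lemma Matrix.isUnit_of_intertwining (hL : Function.Injective L) (hRT : Function.LeftInverse R T)
    (hTA : ∀ v, T (L v) = L (A *ᵥ v)) : IsUnit A :=
  mulVec_injective_iff_isUnit.mp fun v v' h => hL (hRT.injective (by rw [hTA, hTA, h]))

lemma Matrix.apply_eq_inv_mulVec_of_intertwining (hL : Function.Injective L)
    (hRT : Function.LeftInverse R T) (hTA : ∀ v, T (L v) = L (A *ᵥ v)) (v : n → 𝕜) :
    R (L v) = L (A⁻¹ *ᵥ v) := by
  have hA := (isUnit_iff_isUnit_det A).mp (isUnit_of_intertwining hL hRT hTA)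
  conv_lhs => rw [← one_mulVec v, ← mul_nonsing_inv A hA, ← mulVec_mulVec, ← hTA, hRT]

end Intertwining

section Hilbert

variable {E : Type*} [NormedAddCommGroup E] [InnerProductSpace ℝ E]

lemma IsSelfAdjoint.norm_sq_eq_inner_of_comp_self [CompleteSpace E] {S T : E →L[ℝ] E}
    (hS : IsSelfAdjoint S) (hT : S ∘L S = T) (x : E) : ‖S x‖ ^ 2 = ⟪T x, x⟫ := by
  rw [← real_inner_self_eq_norm_sq, ← hT, ContinuousLinearMap.comp_apply]
  exact (hS.isSymmetric (S x) x).symm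

variable {m : Type*} [Fintype m] {φ : m → E}

lemma Orthonormal.inner_linearCombination (hφ : Orthonormal ℝ φ) (a b : m → ℝ) :
    ⟪Fintype.linearCombination ℝ φ a, Fintype.linearCombination ℝ φ b⟫ = a ⬝ᵥ b := by
  simp [Fintype.linearCombination_apply, hφ.inner_sum, dotProduct]

lemma Orthonormal.sampleCovariance_linearCombination {ι : Type*} [Fintype ι] [DecidableEq ι]
    (hφ : Orthonormal ℝ φ) (s : Finset ι) (C : Matrix ι m ℝ) {Y : ι → E}
    (hY : ∀ k, Y k = Fintype.linearCombination ℝ φ (Cᵀ *ᵥ centeredBasisVec ℝ s k))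
    {T : E → E} (hT : ∀ f, T f = (#s : ℝ)⁻¹ • ∑ k ∈ s, ⟪Y k, f⟫ • Y k) (v : m → ℝ) :
    T (Fintype.linearCombination ℝ φ v)
      = Fintype.linearCombination ℝ φ
          (((#s : ℝ)⁻¹ • (Cᵀ * centeringMatrix ℝ s * C)) *ᵥ v) := by
  simp [hT, hY, hφ.inner_linearCombination, ← sum_transpose_mulVec_centeredBasisVec_smul,
    smul_mulVec]

variable [DecidableEq m] {T R : E →L[ℝ] E} {K : Matrix m m ℝ} {α : ℝ}

lemma add_smul_one_apply_linearCombination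
    (hTK : ∀ v, T (Fintype.linearCombination ℝ φ v) = Fintype.linearCombination ℝ φ (K *ᵥ v))
    (v : m → ℝ) :
    (T + α • 1) (Fintype.linearCombination ℝ φ v)
      = Fintype.linearCombination ℝ φ ((K + α • 1) *ᵥ v) := by
  simp [add_mulVec, smul_mulVec, hTK]

lemma Orthonormal.isUnit_add_smul_one (hφ : Orthonormal ℝ φ)
    (hTK : ∀ v, T (Fintype.linearCombination ℝ φ v) = Fintype.linearCombination ℝ φ (K *ᵥ v))
    (hR : R ∘L (T + α • 1) = 1) : IsUnit (K + α • 1) :=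
  isUnit_of_intertwining (R := R) hφ.linearIndependent.fintypeLinearCombination_injective
    (fun x => by simpa using DFunLike.congr_fun hR x) (add_smul_one_apply_linearCombination hTK)

lemma Orthonormal.resolvent_apply_linearCombination (hφ : Orthonormal ℝ φ)
    (hTK : ∀ v, T (Fintype.linearCombination ℝ φ v) = Fintype.linearCombination ℝ φ (K *ᵥ v))
    (hR : R ∘L (T + α • 1) = 1) (v : m → ℝ) :
    R (Fintype.linearCombination ℝ φ v) = Fintype.linearCombination ℝ φ ((K + α • 1)⁻¹ *ᵥ v) :=
  apply_eq_inv_mulVec_of_intertwining hφ.linearIndependent.fintypeLinearCombination_injective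
    (fun x => by simpa using DFunLike.congr_fun hR x) (add_smul_one_apply_linearCombination hTK) v

end Hilbert

theorem alpha_mahalanobis_basis_formula_general
    (I : Set ℝ) (n M h : ℕ) (α : ℝ)
    (φ : Fin M → Lp ℝ 2 (volume.restrict I)) (hΦ : Orthonormal ℝ φ)
    (Cmat : Matrix (Fin n) (Fin M) ℝ)
    (X : Fin n → Lp ℝ 2 (volume.restrict I))
    (hX : ∀ i, X i = ∑ j, Cmat i j • φ j)
    (H0 : Finset (Fin n)) (hcard : H0.card = h)
    (Xbar : Lp ℝ 2 (volume.restrict I))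
    (hXbar : Xbar = (h : ℝ)⁻¹ • ∑ i ∈ H0, X i)
    (ind : Fin n → ℝ) (hind : ind = fun i => if i ∈ H0 then (1 : ℝ) else 0)
    (Ctil : Matrix (Fin M) (Fin M) ℝ)
    (hCtil : Ctil = (h : ℝ)⁻¹ •
      (Cmatᵀ * (Matrix.diagonal ind - (h : ℝ)⁻¹ • vecMulVec ind ind) * Cmat))
    (lhat : Fin M → ℝ) (u : Fin M → Fin M → ℝ)
    (heig : ∀ j, Ctil.mulVec (u j) = lhat j • u j)
    (huortho : ∀ j k, u j ⬝ᵥ u k = if j = k then (1 : ℝ) else 0)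
    (ψhat : Fin M → Lp ℝ 2 (volume.restrict I))
    (hψhat : ∀ j, ψhat j = ∑ k, u j k • φ k)
    (Chat S R : Lp ℝ 2 (volume.restrict I) →L[ℝ] Lp ℝ 2 (volume.restrict I))
    (hChat : ∀ f, Chat f = (h : ℝ)⁻¹ • ∑ i ∈ H0, ⟪X i - Xbar, f⟫ • (X i - Xbar))
    (hS_sa : IsSelfAdjoint S)
    (hS : S ∘L S = Chat)
    (hR₂ : R ∘L (Chat + α • 1) = 1)
    (i : Fin n) (w : Fin n → ℝ)
    (hw : w = fun j => (if j = i then (1 : ℝ) else 0) - (h : ℝ)⁻¹ * ind j) :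
    ‖S (R (X i - Xbar))‖ ^ 2
      = ∑ j, lhat j / (lhat j + α) ^ 2 * ⟪ψhat j, X i - Xbar⟫ ^ 2 ∧
    ‖S (R (X i - Xbar))‖ ^ 2
      = w ⬝ᵥ (Cmat * (Ctil * (Ctil + α • 1)⁻¹ * (Ctil + α • 1)⁻¹) * Cmatᵀ).mulVec w := by
  subst hcard
  obtain rfl : ind = indicatorVec ℝ H0 := hind
  obtain rfl : w = centeredBasisVec ℝ H0 i := hw
  set L := Fintype.linearCombination ℝ φ
  have hY : ∀ k, X k - Xbar = L (Cmatᵀ *ᵥ centeredBasisVec ℝ H0 k) := fun k => by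
    rw [hXbar]; exact sub_average_eq_map_centeredBasisVec H0 L Cmat hX k
  have hChatL : ∀ v, Chat (L v) = L (Ctil *ᵥ v) := fun v => by
    rw [hΦ.sampleCovariance_linearCombination H0 Cmat hY hChat, hCtil, centeringMatrix]
  have hB : ∀ j, (Ctil + α • 1)⁻¹ *ᵥ u j = (lhat j + α)⁻¹ • u j := fun j =>
    inv_mulVec_eq_inv_smul (hΦ.isUnit_add_smul_one hChatL hR₂)
      (by simp [add_mulVec, smul_mulVec, heig, add_smul])
  have hdiv : ∀ j, lhat j * (lhat j + α)⁻¹ * (lhat j + α)⁻¹ = lhat j / (lhat j + α) ^ 2 :=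
    fun j => by rw [← div_eq_mul_inv, ← div_eq_mul_inv, div_div, ← sq]
  set z := Cmatᵀ *ᵥ centeredBasisVec ℝ H0 i with hz
  have hYi : X i - Xbar = L z := hY i
  have hnorm : ‖S (R (X i - Xbar))‖ ^ 2 = ∑ j, lhat j / (lhat j + α) ^ 2 * (u j ⬝ᵥ z) ^ 2 := by
    rw [hS_sa.norm_sq_eq_inner_of_comp_self hS, hYi,
      hΦ.resolvent_apply_linearCombination hChatL hR₂, hChatL, hΦ.inner_linearCombination,
      mulVec_mulVec,
      mulVec_dotProduct_mulVec_eq_sum huortho (fun j => mul_mulVec_eq_smul (heig j) (hB j)) hB]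
    simp_rw [hdiv]
  have hψ : ∀ j, ⟪ψhat j, X i - Xbar⟫ = u j ⬝ᵥ z := fun j => by
    rw [hψhat j, hYi]
    exact hΦ.inner_linearCombination (u j) z
  refine ⟨by simp only [hψ, hnorm], ?_⟩
  rw [hnorm, dotProduct_mul_mul_transpose_mulVec, ← hz, dotProduct_mulVec_eq_sum huortho
    (fun j => mul_mulVec_eq_smul (mul_mulVec_eq_smul (heig j) (hB j)) (hB j))]
  simp_rw [hdiv]

/-- Squared α-Mahalanobis distance in basis representation:
`‖Ĉ_{H₀}^{1/2}(Ĉ_{H₀}+αI)⁻¹(Xᵢ − X̄_{H₀})‖² = ∑ⱼ (λ̂ⱼ/(λ̂ⱼ+α)²) ⟪ψ̂ⱼ, Xᵢ − X̄_{H₀}⟫²`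
which equals the quadratic form
`(eᵢ − (1/h)1_{H₀})' C C̃_{H₀}(C̃_{H₀} + αI)⁻² C' (eᵢ − (1/h)1_{H₀})`. -/
theorem alpha_mahalanobis_basis_formula
    (I : Set ℝ) (n M h : ℕ) (hpos : 0 < h) (α : ℝ) (hα : 0 < α)
    (φ : Fin M → Lp ℝ 2 (volume.restrict I)) (hΦ : Orthonormal ℝ φ)
    (Cmat : Matrix (Fin n) (Fin M) ℝ)
    (X : Fin n → Lp ℝ 2 (volume.restrict I))
    (hX : ∀ i, X i = ∑ j, Cmat i j • φ j)
    (H0 : Finset (Fin n)) (hcard : H0.card = h)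
    (Xbar : Lp ℝ 2 (volume.restrict I))
    (hXbar : Xbar = (h : ℝ)⁻¹ • ∑ i ∈ H0, X i)
    (ind : Fin n → ℝ) (hind : ind = fun i => if i ∈ H0 then (1 : ℝ) else 0)
    (Ctil : Matrix (Fin M) (Fin M) ℝ)
    (hCtil : Ctil = (h : ℝ)⁻¹ •
      (Cmatᵀ * (Matrix.diagonal ind - (h : ℝ)⁻¹ • vecMulVec ind ind) * Cmat))
    (lhat : Fin M → ℝ) (u : Fin M → Fin M → ℝ)
    (heig : ∀ j, Ctil.mulVec (u j) = lhat j • u j)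
    (huortho : ∀ j k, u j ⬝ᵥ u k = if j = k then (1 : ℝ) else 0)
    (ψhat : Fin M → Lp ℝ 2 (volume.restrict I))
    (hψhat : ∀ j, ψhat j = ∑ k, u j k • φ k)
    (Chat S R : Lp ℝ 2 (volume.restrict I) →L[ℝ] Lp ℝ 2 (volume.restrict I))
    (hChat : ∀ f, Chat f = (h : ℝ)⁻¹ • ∑ i ∈ H0, ⟪X i - Xbar, f⟫ • (X i - Xbar))
    (hS_sa : IsSelfAdjoint S) (hS_pos : ∀ f, 0 ≤ ⟪S f, f⟫)
    (hS : S ∘L S = Chat)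
    (hR₁ : (Chat + α • 1) ∘L R = 1) (hR₂ : R ∘L (Chat + α • 1) = 1)
    (i : Fin n) (w : Fin n → ℝ)
    (hw : w = fun j => (if j = i then (1 : ℝ) else 0) - (h : ℝ)⁻¹ * ind j) :
    ‖S (R (X i - Xbar))‖ ^ 2
      = ∑ j, lhat j / (lhat j + α) ^ 2 * ⟪ψhat j, X i - Xbar⟫ ^ 2 ∧
    ‖S (R (X i - Xbar))‖ ^ 2
      = w ⬝ᵥ (Cmat * (Ctil * (Ctil + α • 1)⁻¹ * (Ctil + α • 1)⁻¹) * Cmatᵀ).mulVec w :=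
  alpha_mahalanobis_basis_formula_general I n M h α φ hΦ Cmat X hX H0 hcard Xbar hXbar ind hind Ctil
    hCtil lhat u heig huortho ψhat hψhat Chat S R hChat hS_sa hS hR₂ i w hw
end

section
/- Under the assumptions that ‖Ĉ_n − C‖_op → 0 for bounded self-adjoint positive semidefinite operators and ‖μ̂_n‖ → 0, one has for every fixed X ∈ H and α > 0: ‖Ĉ_n^{1/2}(Ĉ_n + αI)^{-1}(X − μ̂_n)‖ → ‖C^{1/2}(C + αI)^{-1} X‖. -/
/-!
The operator `Ĉₙ^{1/2}` only enters through the identity `‖S x‖² = ⟪S x, S x⟫ = ⟪C x, x⟫` for a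
self-adjoint square root `S` of `C`, so no continuity of the square root is needed: it suffices
that `zₙ := (Ĉₙ + αI)⁻¹(X − μ̂ₙ) → (C + αI)⁻¹X` and `Ĉₙ → C`. The first follows from the resolvent
identity `R' − R = R'(A − A')R` together with the uniform bound `‖(Ĉₙ + αI)⁻¹‖ ≤ α⁻¹`, which holds
because `α‖x‖² ≤ ⟪(Ĉₙ + αI)x, x⟫` for positive `Ĉₙ`.
-/

open Filter Topology
open scoped RealInnerProductSpace

lemma sub_eq_mul_sub_mul_of_mul_eq_one {R : Type*} [Ring R] {a a' b b' : R}
    (hab : a * b = 1) (hab' : b' * a' = 1) : b' - b = b' * (a - a') * b := by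
  rw [mul_sub, sub_mul, mul_assoc, hab, mul_one, hab', one_mul]

lemma tendsto_of_mul_eq_one_of_norm_le {R ι : Type*} [NormedRing R] {l : Filter ι} {a : R}
    {a' : ι → R} {b : R} {b' : ι → R} {K : ℝ} (ha : Tendsto a' l (𝓝 a)) (hab : a * b = 1)
    (hab' : ∀ i, b' i * a' i = 1) (hb' : ∀ i, ‖b' i‖ ≤ K) :
    Tendsto b' l (𝓝 b) := by
  rw [tendsto_iff_norm_sub_tendsto_zero] at ha ⊢
  refine squeeze_zero (fun _ => norm_nonneg _) (g := fun i => K * ‖a' i - a‖ * ‖b‖) (fun i => ?_)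
    (by simpa using (ha.const_mul K).mul_const ‖b‖)
  calc ‖b' i - b‖ = ‖b' i * (a - a' i) * b‖ := by
        rw [sub_eq_mul_sub_mul_of_mul_eq_one hab (hab' i)]
    _ ≤ ‖b' i‖ * ‖a - a' i‖ * ‖b‖ := norm_mul₃_le
    _ ≤ K * ‖a' i - a‖ * ‖b‖ := by rw [norm_sub_rev]; gcongr; exact hb' i

section InnerProductSpace

variable {H : Type*} [NormedAddCommGroup H] [InnerProductSpace ℝ H]

lemma ContinuousLinearMap.mul_norm_le_norm_add_smul_one_apply {A : H →L[ℝ] H}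
    (hA : ∀ x, 0 ≤ ⟪A x, x⟫) (α : ℝ) (x : H) :
    α * ‖x‖ ≤ ‖(A + α • 1) x‖ := by
  rcases (norm_nonneg x).eq_or_lt with hx | hx
  · rw [← hx, mul_zero]; exact norm_nonneg _
  refine le_of_mul_le_mul_right ?_ hx
  calc α * ‖x‖ * ‖x‖ ≤ ⟪A x, x⟫ + α * ⟪x, x⟫ := by
        rw [real_inner_self_eq_norm_mul_norm]; linarith [hA x]
    _ = ⟪(A + α • 1) x, x⟫ := by simp [inner_add_left, real_inner_smul_left]
    _ ≤ ‖(A + α • 1) x‖ * ‖x‖ := real_inner_le_norm _ _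

lemma ContinuousLinearMap.norm_le_inv_of_add_smul_one_comp_eq_one {A B : H →L[ℝ] H}
    (hA : ∀ x, 0 ≤ ⟪A x, x⟫) {α : ℝ} (hα : 0 < α) (hB : (A + α • 1) ∘L B = 1) :
    ‖B‖ ≤ α⁻¹ := by
  refine ContinuousLinearMap.opNorm_le_bound _ (inv_nonneg.2 hα.le) fun y => ?_
  rw [le_inv_mul_iff₀ hα]
  calc α * ‖B y‖ ≤ ‖(A + α • 1) (B y)‖ := mul_norm_le_norm_add_smul_one_apply hA α (B y)
    _ = ‖y‖ := by rw [← ContinuousLinearMap.comp_apply, hB]; rfl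

lemma ContinuousLinearMap.norm_apply_eq_sqrt_inner_of_comp_self [CompleteSpace H]
    {S C : H →L[ℝ] H} (hS : IsSelfAdjoint S) (hSC : S ∘L S = C) (x : H) :
    ‖S x‖ = √⟪C x, x⟫ := by
  simpa [hS.adjoint_eq, hSC] using S.apply_norm_eq_sqrt_inner_adjoint_left x

end InnerProductSpace

lemma Filter.Tendsto.continuousLinearMap_apply {𝕜 E F ι : Type*} [NontriviallyNormedField 𝕜]
    [NormedAddCommGroup E] [NormedSpace 𝕜 E] [NormedAddCommGroup F] [NormedSpace 𝕜 F]
    {l : Filter ι} {T : ι → E →L[𝕜] F} {T₀ : E →L[𝕜] F} {x : ι → E} {x₀ : E}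
    (hT : Tendsto T l (𝓝 T₀)) (hx : Tendsto x l (𝓝 x₀)) :
    Tendsto (fun i => T i (x i)) l (𝓝 (T₀ x₀)) :=
  (isBoundedBilinearMap_apply.continuous.tendsto (T₀, x₀)).comp (hT.prodMk_nhds hx)

theorem empirical_standardization_norm_convergence_general
    {H : Type*} [NormedAddCommGroup H] [InnerProductSpace ℝ H] [CompleteSpace H]
    (C : H →L[ℝ] H) (Cn : ℕ → H →L[ℝ] H)
    (hCn_pos : ∀ n x, 0 ≤ ⟪Cn n x, x⟫)
    (hconv : Tendsto (fun n => ‖Cn n - C‖) atTop (nhds 0))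
    (μn : ℕ → H) (hμ : Tendsto (fun n => ‖μn n‖) atTop (nhds 0))
    (α : ℝ) (hα : 0 < α)
    (S : H →L[ℝ] H) (Sn : ℕ → H →L[ℝ] H)
    (hS_sa : IsSelfAdjoint S) (hS : S ∘L S = C)
    (hSn_sa : ∀ n, IsSelfAdjoint (Sn n))
    (hSn : ∀ n, Sn n ∘L Sn n = Cn n)
    (R : H →L[ℝ] H) (Rn : ℕ → H →L[ℝ] H)
    (hR₁ : (C + α • (1 : H →L[ℝ] H)) ∘L R = 1)
    (hRn₁ : ∀ n, (Cn n + α • (1 : H →L[ℝ] H)) ∘L Rn n = 1)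
    (hRn₂ : ∀ n, Rn n ∘L (Cn n + α • (1 : H →L[ℝ] H)) = 1)
    (X : H) :
    Tendsto (fun n => ‖Sn n (Rn n (X - μn n))‖) atTop (nhds ‖S (R X)‖) := by
  have hCn : Tendsto Cn atTop (𝓝 C) := tendsto_iff_norm_sub_tendsto_zero.2 hconv
  have hRn : Tendsto Rn atTop (𝓝 R) :=
    tendsto_of_mul_eq_one_of_norm_le (hCn.add_const _) hR₁ hRn₂ fun n =>
      ContinuousLinearMap.norm_le_inv_of_add_smul_one_comp_eq_one (hCn_pos n) hα (hRn₁ n)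
  have hz : Tendsto (fun n => Rn n (X - μn n)) atTop (𝓝 (R X)) := by
    simpa using hRn.continuousLinearMap_apply
      (tendsto_const_nhds.sub (tendsto_zero_iff_norm_tendsto_zero.2 hμ))
  simp only [ContinuousLinearMap.norm_apply_eq_sqrt_inner_of_comp_self (hSn_sa _) (hSn _),
    ContinuousLinearMap.norm_apply_eq_sqrt_inner_of_comp_self hS_sa hS]
  exact ((hCn.continuousLinearMap_apply hz).inner hz).sqrt

/-- Deterministic core of consistency of the empirical α-standardization norm:
if `‖Ĉₙ − C‖ → 0` (bounded self-adjoint positive semidefinite operators) and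
`‖μ̂ₙ‖ → 0`, then for fixed `X` and `α > 0`,
`‖Ĉₙ^{1/2}(Ĉₙ + αI)⁻¹(X − μ̂ₙ)‖ → ‖C^{1/2}(C + αI)⁻¹ X‖`. -/
theorem empirical_standardization_norm_convergence
    {H : Type*} [NormedAddCommGroup H] [InnerProductSpace ℝ H] [CompleteSpace H]
    (C : H →L[ℝ] H) (Cn : ℕ → H →L[ℝ] H)
    (hC_sa : IsSelfAdjoint C) (hC_pos : ∀ x, 0 ≤ ⟪C x, x⟫)
    (hCn_sa : ∀ n, IsSelfAdjoint (Cn n)) (hCn_pos : ∀ n x, 0 ≤ ⟪Cn n x, x⟫)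
    (hconv : Tendsto (fun n => ‖Cn n - C‖) atTop (nhds 0))
    (μn : ℕ → H) (hμ : Tendsto (fun n => ‖μn n‖) atTop (nhds 0))
    (α : ℝ) (hα : 0 < α)
    (S : H →L[ℝ] H) (Sn : ℕ → H →L[ℝ] H)
    (hS_sa : IsSelfAdjoint S) (hS_pos : ∀ x, 0 ≤ ⟪S x, x⟫) (hS : S ∘L S = C)
    (hSn_sa : ∀ n, IsSelfAdjoint (Sn n)) (hSn_pos : ∀ n x, 0 ≤ ⟪Sn n x, x⟫)
    (hSn : ∀ n, Sn n ∘L Sn n = Cn n)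
    (R : H →L[ℝ] H) (Rn : ℕ → H →L[ℝ] H)
    (hR₁ : (C + α • (1 : H →L[ℝ] H)) ∘L R = 1)
    (hR₂ : R ∘L (C + α • (1 : H →L[ℝ] H)) = 1)
    (hRn₁ : ∀ n, (Cn n + α • (1 : H →L[ℝ] H)) ∘L Rn n = 1)
    (hRn₂ : ∀ n, Rn n ∘L (Cn n + α • (1 : H →L[ℝ] H)) = 1)
    (X : H) :
    Tendsto (fun n => ‖Sn n (Rn n (X - μn n))‖) atTop (nhds ‖S (R X)‖) :=
  empirical_standardization_norm_convergence_general C Cn hCn_pos hconv μn hμ α hα S Sn hS_sa hS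
    hSn_sa hSn R Rn hR₁ hRn₁ hRn₂ X
end
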